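/- In the post-source-switch ABF evolution, any node i in I_1(t) = {i : d(D-1,i) < t and d(0,i) ≥ t} has distance estimate d̂_i(t) ∈ {t, t+1}. -/

import Mathlib

/-!
From the new source `z` the estimates are bounded below by `min t (d(z,i))`: the minimum over
neighbours loses at most one unit of `d(z, ·)` per round, and `d̂_z = 0` from round `1` on.
From above they are bounded by `max (d(o,i)) (t + 1)`, which survives each round by relaying
through a neighbour one step closer to `o` (any neighbour, when `i = o`).
On `I_1(t)` the two bounds read `t ≤ d̂_i(t) ≤ t + 1`.
-/

namespace SimpleGraph

variable {V : Type*} {G : SimpleGraph V}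

lemma Adj.dist_le_dist_add_one {u v w : V} (h : G.Adj v w) : G.dist u w ≤ G.dist u v + 1 := by
  rcases h.diff_dist_adj (u := u) with h | h | h <;> omega

lemma exists_adj_dist_add_one_eq {u v : V} (h : G.dist u v ≠ 0) :
    ∃ w, G.Adj v w ∧ G.dist u w + 1 = G.dist u v := by
  obtain ⟨p, hp⟩ := exists_walk_of_dist_ne_zero (dist_comm (G := G) ▸ h)
  cases p with
  | nil => simp at h
  | cons hadj q =>
    rename_i w
    have hq : G.dist w u ≤ q.length := dist_le q
    have hback : G.dist u v ≤ G.dist u w + 1 := hadj.symm.dist_le_dist_add_one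
    rw [Walk.length_cons, dist_comm] at hp
    exact ⟨w, hadj, by rw [dist_comm] at hq; omega⟩

variable [Fintype V] [DecidableRel G.Adj]

theorem min_dist_le_of_relaxation (z : V) (hne : ∀ i : V, (G.neighborFinset i).Nonempty)
    (dh : ℕ → V → ℕ) (hsrc : ∀ t, dh (t + 1) z = 0)
    (hupd : ∀ t i, i ≠ z →
      dh (t + 1) i = 1 + (G.neighborFinset i).inf' (hne i) (fun j => dh t j)) (t : ℕ) (i : V) :
    min t (G.dist z i) ≤ dh t i := by
  induction t generalizing i with
  | zero => simp
  | succ t ih =>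
    by_cases hiz : i = z
    · simp [hiz, hsrc]
    have hinf : min t (G.dist z i - 1) ≤ (G.neighborFinset i).inf' (hne i) (fun j => dh t j) := by
      refine Finset.le_inf' _ _ fun j hj => ?_
      have hzj : G.dist z i ≤ G.dist z j + 1 :=
        ((mem_neighborFinset G i j).mp hj).symm.dist_le_dist_add_one
      have := ih j
      omega
    rw [hupd t i hiz]
    omega

theorem le_max_dist_of_relaxation (z o : V) (hne : ∀ i : V, (G.neighborFinset i).Nonempty)
    (dh : ℕ → V → ℕ) (hinit : ∀ i, dh 0 i = G.dist o i) (hsrc : ∀ t, dh (t + 1) z = 0)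
    (hupd : ∀ t i, i ≠ z →
      dh (t + 1) i = 1 + (G.neighborFinset i).inf' (hne i) (fun j => dh t j)) (t : ℕ) (i : V) :
    dh t i ≤ max (G.dist o i) (t + 1) := by
  induction t generalizing i with
  | zero => simp [hinit]
  | succ t ih =>
    by_cases hiz : i = z
    · simp [hiz, hsrc]
    obtain ⟨j, hadj, hj⟩ : ∃ j, G.Adj i j ∧ G.dist o j ≤ max (G.dist o i - 1) 1 := by
      by_cases hoi : G.dist o i = 0
      · obtain ⟨j, hj⟩ := hne i
        have := ((mem_neighborFinset G i j).mp hj).dist_le_dist_add_one (u := o)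
        exact ⟨j, (mem_neighborFinset G i j).mp hj, by omega⟩
      · obtain ⟨j, hadj, hj⟩ := exists_adj_dist_add_one_eq hoi
        exact ⟨j, hadj, by omega⟩
    have hinf := Finset.inf'_le (fun j => dh t j) ((mem_neighborFinset G i j).mpr hadj)
    have := ih j
    rw [hupd t i hiz]
    omega

end SimpleGraph

open SimpleGraph in
theorem abf_switch_middle_region_general {V : Type*} [Fintype V]
    (G : SimpleGraph V) [DecidableRel G.Adj] (z o : V)
    (hne : ∀ i : V, (G.neighborFinset i).Nonempty)
    (dh : ℕ → V → ℕ)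
    (hinit : ∀ i, dh 0 i = G.dist o i)
    (hsrc : ∀ t, 1 ≤ t → dh t z = 0)
    (hupd : ∀ t, 1 ≤ t → ∀ i, i ≠ z →
      dh t i = 1 + (G.neighborFinset i).inf' (hne i) (fun j => dh (t - 1) j)) :
    ∀ t, 1 ≤ t → ∀ i, G.dist o i < t → t ≤ G.dist z i →
      dh t i = t ∨ dh t i = t + 1 := by
  have hsrc' : ∀ t, dh (t + 1) z = 0 := fun t => hsrc (t + 1) t.succ_pos
  have hupd' : ∀ t i, i ≠ z →
      dh (t + 1) i = 1 + (G.neighborFinset i).inf' (hne i) (fun j => dh t j) :=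
    fun t => hupd (t + 1) t.succ_pos
  intro t _ i hoi hzi
  have hlow := min_dist_le_of_relaxation z hne dh hsrc' hupd' t i
  have hup := le_max_dist_of_relaxation z o hne dh hinit hsrc' hupd' t i
  omega

/-- Source switch from old source `o` to new source `z` with `d(z,o) ≥ 3`:
any node in `I_1(t) = {i : d(o,i) < t and d(z,i) ≥ t}` has distance estimate
`d̂_i(t) ∈ {t, t+1}`. -/
theorem abf_switch_middle_region {V : Type*} [Fintype V] [DecidableEq V]
    (G : SimpleGraph V) [DecidableRel G.Adj] (hconn : G.Connected) (z o : V)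
    (hzo : 3 ≤ G.dist z o)
    (hne : ∀ i : V, (G.neighborFinset i).Nonempty)
    (dh : ℕ → V → ℕ)
    (hinit : ∀ i, dh 0 i = G.dist o i)
    (hsrc : ∀ t, 1 ≤ t → dh t z = 0)
    (hupd : ∀ t, 1 ≤ t → ∀ i, i ≠ z →
      dh t i = 1 + (G.neighborFinset i).inf' (hne i) (fun j => dh (t - 1) j)) :
    ∀ t, 1 ≤ t → ∀ i, G.dist o i < t → t ≤ G.dist z i →
      dh t i = t ∨ dh t i = t + 1 :=
  abf_switch_middle_region_general G z o hne dh hinit hsrc hupd
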